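/- arXiv:2502.19050 — 6 statements merged into one kernel-verified Lean document; each statement's English description precedes it below -/
import Mathlib

section
/- Let S ⊆ ℝ² be a convex, compact set containing the origin with all points having nonnegative coordinates. Let B = max{x₁ : x ∈ S} and P = max{x₂ : x ∈ S} and assume B, P > 0. For any point x ∈ S, setting C = min{x₁/B, x₂/P}, there exists a point y ∈ S with y₁/B = y₂/P and y₁ + y₂ ≥ C·(B + P). -/
/-- Auxiliary lemma: the one-sided case where `x.1/B ≤ x.2/P` and a point `b ∈ S`
achieves the first-coordinate ideal `B`. -/
lemma bargaining_aux
    (S : Set (ℝ × ℝ)) (hconv : Convex ℝ S)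
    (B P : ℝ) (hBpos : 0 < B) (hPpos : 0 < P)
    (x : ℝ × ℝ) (hx : x ∈ S)
    (b : ℝ × ℝ) (hb : b ∈ S) (hb1 : b.1 = B) (hb2 : b.2 ≤ P)
    (hxB : x.1 ≤ B) (hle : x.1 / B ≤ x.2 / P) :
    ∃ y ∈ S, y.1 / B = y.2 / P ∧ x.1 / B * (B + P) ≤ y.1 + y.2 := by
  set a : ℝ := x.2 / P - x.1 / B with ha_def
  set d : ℝ := 1 - b.2 / P with hd_def
  have ha : 0 ≤ a := by simp [ha_def]; linarith
  have hd : 0 ≤ d := by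
    have : b.2 / P ≤ 1 := by
      rw [div_le_one hPpos]; exact hb2
    simp [hd_def]; linarith
  rcases eq_or_lt_of_le (by positivity : (0:ℝ) ≤ a + d) with had | had
  · -- a + d = 0, hence a = 0, so x itself is on the line
    have ha0 : a = 0 := by linarith
    have heq : x.1 / B = x.2 / P := by
      have : x.2 / P - x.1 / B = 0 := ha0
      linarith
    refine ⟨x, hx, heq, ?_⟩
    have h1 : x.1 / B * B = x.1 := div_mul_cancel₀ _ hBpos.ne'
    have h2 : x.1 / B * P = x.2 := by rw [heq]; exact div_mul_cancel₀ _ hPpos.ne'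
    nlinarith
  · set t : ℝ := a / (a + d) with ht_def
    have ht0 : 0 ≤ t := by positivity
    have ht1 : t ≤ 1 := by
      rw [ht_def, div_le_one had]; linarith
    set y : ℝ × ℝ := (1 - t) • x + t • b with hy_def
    have hyS : y ∈ S := hconv hx hb (by linarith) ht0 (by ring)
    have hy1 : y.1 = (1 - t) * x.1 + t * B := by simp [hy_def, hb1]
    have hy2 : y.2 = (1 - t) * x.2 + t * b.2 := by simp [hy_def]
    have htad : t * (a + d) = a := div_mul_cancel₀ _ had.ne'
    have hline : y.1 / B = y.2 / P := by
      have e1 : y.1 / B = (1 - t) * (x.1 / B) + t := by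
        rw [hy1]; field_simp
      have e2 : y.2 / P = (1 - t) * (x.2 / P) + t * (b.2 / P) := by
        rw [hy2]; field_simp
      rw [e1, e2]
      have : x.2 / P = x.1 / B + a := by rw [ha_def]; ring
      have hbP : b.2 / P = 1 - d := by rw [hd_def]; ring
      rw [this, hbP]
      linear_combination htad
    refine ⟨y, hyS, hline, ?_⟩
    have hx1y : x.1 ≤ y.1 := by
      rw [hy1]; nlinarith
    have hy2P : y.2 * B = y.1 * P := by
      have := hline
      field_simp at this
      linarith
    have h1 : x.1 / B * B = x.1 := div_mul_cancel₀ _ hBpos.ne'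
    nlinarith [mul_le_mul_of_nonneg_right hx1y hPpos.le]

/-- black-box reduction for bargaining: in a convex compact bargaining set `S`
containing the origin, with all utilities nonnegative, with ideal utilities `B, P > 0`, any
point `x ∈ S` can be converted into a point `y ∈ S` on the Kalai–Smorodinsky line whose total
utility is at least `C·(B+P)` where `C = min (x₁/B) (x₂/P)`. -/
theorem bargaining_blackbox_reduction
    (S : Set (ℝ × ℝ)) (hconv : Convex ℝ S) (hcomp : IsCompact S)
    (h0 : (0, 0) ∈ S) (hnonneg : ∀ x ∈ S, 0 ≤ x.1 ∧ 0 ≤ x.2)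
    (B P : ℝ)
    (hB : IsGreatest ((fun x : ℝ × ℝ => x.1) '' S) B)
    (hP : IsGreatest ((fun x : ℝ × ℝ => x.2) '' S) P)
    (hBpos : 0 < B) (hPpos : 0 < P)
    (x : ℝ × ℝ) (hx : x ∈ S) :
    ∃ y ∈ S, y.1 / B = y.2 / P ∧ min (x.1 / B) (x.2 / P) * (B + P) ≤ y.1 + y.2 := by
  obtain ⟨b, hbS, hb1⟩ := hB.1
  obtain ⟨p, hpS, hp2⟩ := hP.1
  have hb2 : b.2 ≤ P := hP.2 ⟨b, hbS, rfl⟩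
  have hp1 : p.1 ≤ B := hB.2 ⟨p, hpS, rfl⟩
  have hxB : x.1 ≤ B := hB.2 ⟨x, hx, rfl⟩
  have hxP : x.2 ≤ P := hP.2 ⟨x, hx, rfl⟩
  rcases le_total (x.1 / B) (x.2 / P) with hle | hle
  · obtain ⟨y, hyS, hy, hsum⟩ :=
      bargaining_aux S hconv B P hBpos hPpos x hx b hbS hb1 hb2 hxB hle
    exact ⟨y, hyS, hy, by rw [min_eq_left hle]; exact hsum⟩
  · -- symmetric case: apply the aux lemma to the swapped set
    have hconv' : Convex ℝ (Prod.swap '' S) :=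
      hconv.is_linear_image ⟨fun u v => rfl, fun c u => rfl⟩
    obtain ⟨y, hyS, hy, hsum⟩ :=
      bargaining_aux (Prod.swap '' S) hconv' P B hPpos hBpos
        x.swap ⟨x, hx, rfl⟩ p.swap ⟨p, hpS, rfl⟩ hp2 hp1 hxP hle
    obtain ⟨z, hzS, hz⟩ := hyS
    refine ⟨z, hzS, ?_, ?_⟩
    · have : y.1 = z.2 ∧ y.2 = z.1 := by
        rw [← hz]; exact ⟨rfl, rfl⟩
      rw [this.1, this.2] at hy
      exact hy.symm
    · have h1 : y.1 = z.2 := by rw [← hz]; rfl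
      have h2 : y.2 = z.1 := by rw [← hz]; rfl
      rw [h1, h2] at hsum
      rw [min_eq_right hle]
      have hxs1 : x.swap.1 = x.2 := rfl
      rw [hxs1] at hsum
      linarith
end

section
/- Let S ⊆ ℝ² be a convex, compact set containing the origin with nonnegative coordinates, with ideal coordinates B = max{x₁ : x ∈ S} > 0 and P = max{x₂ : x ∈ S} > 0. Then there exists a point y ∈ S on the KS-line (i.e., y₁/B = y₂/P) with y₁ + y₂ ≥ (1/2)·(B + P). -/
/-!
The points `b, p ∈ S` attaining `B` and `P` lie on opposite sides of the KS-line, so the segment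
joining them, which stays in `S` by convexity, crosses it at some `y = s • p + t • b`. Since
`y₁ ≥ t B` and `y₂ ≥ s P`, the common ratio `λ = y₁ / B = y₂ / P` is at least `max s t ≥ 1 / 2`,
and `y₁ + y₂ = λ (B + P)`.
-/

open Set

theorem exists_mem_segment_apply_eq_zero {E : Type*} [AddCommGroup E] [Module ℝ E]
    (f : E →ᵃ[ℝ] ℝ) {a b : E} (ha : f a ≤ 0) (hb : 0 ≤ f b) :
    ∃ y ∈ segment ℝ a b, f y = 0 := by
  have h : (0 : ℝ) ∈ segment ℝ (f a) (f b) := by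
    rw [segment_eq_Icc (ha.trans hb)]
    exact ⟨ha, hb⟩
  rwa [← image_segment] at h

theorem exists_mem_segment_div_eq_div {B P : ℝ} (hB : 0 < B) (hP : 0 < P) {p b : ℝ × ℝ}
    (hp1 : p.1 ≤ B) (hp2 : p.2 = P) (hb1 : b.1 = B) (hb2 : b.2 ≤ P) :
    ∃ y ∈ segment ℝ p b, y.1 / B = y.2 / P := by
  let ks : ℝ × ℝ →ᵃ[ℝ] ℝ :=
    ((1 / B) • LinearMap.fst ℝ ℝ ℝ - (1 / P) • LinearMap.snd ℝ ℝ ℝ).toAffineMap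
  have hks (x : ℝ × ℝ) : ks x = x.1 / B - x.2 / P := by
    simp [ks, div_eq_inv_mul]
  obtain ⟨y, hy, hy0⟩ := exists_mem_segment_apply_eq_zero ks
    (a := p) (b := b) (by rw [hks, hp2, div_self hP.ne', sub_nonpos, div_le_one hB]; exact hp1)
    (by rw [hks, hb1, div_self hB.ne', sub_nonneg, div_le_one hP]; exact hb2)
  exact ⟨y, hy, sub_eq_zero.mp ((hks y).symm.trans hy0)⟩

theorem half_le_div_of_mem_segment {B P : ℝ} (hB : 0 < B) (hP : 0 < P) {p b y : ℝ × ℝ}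
    (hp1 : 0 ≤ p.1) (hp2 : p.2 = P) (hb1 : b.1 = B) (hb2 : 0 ≤ b.2)
    (hy : y ∈ segment ℝ p b) (hline : y.1 / B = y.2 / P) :
    1 / 2 ≤ y.1 / B := by
  obtain ⟨s, t, hs, ht, hst, rfl⟩ := hy
  have ht_le : t ≤ (s • p + t • b).1 / B := by
    rw [le_div_iff₀ hB]
    simp only [Prod.fst_add, Prod.smul_fst, smul_eq_mul, hb1]
    nlinarith
  have hs_le : s ≤ (s • p + t • b).2 / P := by
    rw [le_div_iff₀ hP]
    simp only [Prod.snd_add, Prod.smul_snd, smul_eq_mul, hp2]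
    nlinarith
  linarith

theorem ks_line_half_ideal_total_utility_general
    (S : Set (ℝ × ℝ)) (hconv : Convex ℝ S)
    (hnonneg : ∀ x ∈ S, 0 ≤ x.1 ∧ 0 ≤ x.2)
    (B P : ℝ)
    (hB : IsGreatest ((fun x : ℝ × ℝ => x.1) '' S) B)
    (hP : IsGreatest ((fun x : ℝ × ℝ => x.2) '' S) P)
    (hBpos : 0 < B) (hPpos : 0 < P) :
    ∃ y ∈ S, y.1 / B = y.2 / P ∧ (1 / 2) * (B + P) ≤ y.1 + y.2 := by
  obtain ⟨b, hbS, hb1⟩ := hB.1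
  obtain ⟨p, hpS, hp2⟩ := hP.1
  obtain ⟨y, hy, hline⟩ := exists_mem_segment_div_eq_div hBpos hPpos
    (hB.2 ⟨p, hpS, rfl⟩) hp2 hb1 (hP.2 ⟨b, hbS, rfl⟩)
  have hhalf := half_le_div_of_mem_segment hBpos hPpos (hnonneg p hpS).1 hp2 hb1
    (hnonneg b hbS).2 hy hline
  refine ⟨y, hconv.segment_subset hpS hbS hy, hline, ?_⟩
  calc 1 / 2 * (B + P) ≤ y.1 / B * (B + P) := by gcongr
    _ = y.1 / B * B + y.2 / P * P := by rw [mul_add, hline]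
    _ = y.1 + y.2 := by rw [div_mul_cancel₀ _ hBpos.ne', div_mul_cancel₀ _ hPpos.ne']

/-- in a convex compact bargaining set `S` containing the origin, with nonnegative
coordinates and ideal coordinates `B, P > 0`, there exists a point `y ∈ S` on the KS-line
(`y₁/B = y₂/P`) with total utility at least half the ideal total utility `(B+P)/2`. -/
theorem ks_line_half_ideal_total_utility
    (S : Set (ℝ × ℝ)) (hconv : Convex ℝ S) (hcomp : IsCompact S)
    (h0 : (0, 0) ∈ S) (hnonneg : ∀ x ∈ S, 0 ≤ x.1 ∧ 0 ≤ x.2)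
    (B P : ℝ)
    (hB : IsGreatest ((fun x : ℝ × ℝ => x.1) '' S) B)
    (hP : IsGreatest ((fun x : ℝ × ℝ => x.2) '' S) P)
    (hBpos : 0 < B) (hPpos : 0 < P) :
    ∃ y ∈ S, y.1 / B = y.2 / P ∧ (1 / 2) * (B + P) ≤ y.1 + y.2 :=
  ks_line_half_ideal_total_utility_general S hconv hnonneg B P hB hP hBpos hPpos
end

section
/- Let S ⊆ ℝ² be a convex compact set of points with strictly positive coordinates possible, containing the origin, with B = max{x₁ : x ∈ S} > 0 and P = max{x₂ : x ∈ S} > 0. If x* ∈ S maximizes the product x₁·x₂ over S, then x*₁ ≥ B/2 and x*₂ ≥ P/2. -/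
/-- a Nash-social-welfare maximizing point of a convex compact bargaining set
gives each agent at least half of her ideal utility. -/
theorem nash_solution_half_ideal
    (S : Set (ℝ × ℝ)) (hconv : Convex ℝ S) (hcomp : IsCompact S)
    (h0 : (0, 0) ∈ S) (hnonneg : ∀ x ∈ S, 0 ≤ x.1 ∧ 0 ≤ x.2)
    (B P : ℝ)
    (hB : IsGreatest ((fun x : ℝ × ℝ => x.1) '' S) B)
    (hP : IsGreatest ((fun x : ℝ × ℝ => x.2) '' S) P)
    (hBpos : 0 < B) (hPpos : 0 < P)
    (xs : ℝ × ℝ) (hxs : xs ∈ S)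
    (hmax : ∀ y ∈ S, y.1 * y.2 ≤ xs.1 * xs.2) :
    B / 2 ≤ xs.1 ∧ P / 2 ≤ xs.2 := by
  obtain ⟨⟨b, hbS, hb1⟩, hBub⟩ := hB
  obtain ⟨⟨p, hpS, hp2⟩, hPub⟩ := hP
  have hb2 : 0 ≤ b.2 := (hnonneg b hbS).2
  have hp1 : 0 ≤ p.1 := (hnonneg p hpS).1
  -- midpoint gives positive product
  have hmS : ((1/2 : ℝ) • b + (1/2 : ℝ) • p) ∈ S :=
    hconv hbS hpS (by norm_num) (by norm_num) (by norm_num)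
  have hmprod := hmax _ hmS
  simp only [Prod.smul_fst, Prod.smul_snd, Prod.fst_add, Prod.snd_add, smul_eq_mul] at hmprod
  have hprodpos : 0 < xs.1 * xs.2 := by nlinarith [mul_pos hBpos hPpos]
  have hx1 : 0 < xs.1 := by
    rcases (hnonneg xs hxs) with ⟨h1, h2⟩
    rcases h1.lt_or_eq with h | h
    · exact h
    · nlinarith
  have hx2 : 0 < xs.2 := by
    rcases (hnonneg xs hxs) with ⟨h1, h2⟩
    rcases h2.lt_or_eq with h | h
    · exact h
    · nlinarith
  constructor
  · by_contra hc
    push_neg at hc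
    set a := xs.1 with ha
    have hden : 0 < B - a := by linarith
    set t : ℝ := B / (2 * (B - a)) with htdef
    have ht0 : 0 < t := by positivity
    have ht1 : t < 1 := by
      rw [htdef, div_lt_one (by linarith)]; linarith
    have hzS : (t • xs + (1 - t) • b) ∈ S :=
      hconv hxs hbS ht0.le (by linarith) (by ring)
    have hz := hmax _ hzS
    simp only [Prod.smul_fst, Prod.smul_snd, Prod.fst_add, Prod.snd_add, smul_eq_mul] at hz
    have h1 : t * xs.1 + (1 - t) * b.1 = B / 2 := by
      have hb1' : b.1 = B := hb1
      rw [htdef, hb1']; field_simp; ring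
    rw [h1] at hz
    have hkey : t * B / 2 > xs.1 := by
      rw [htdef]
      rw [gt_iff_lt, lt_div_iff₀ (by linarith)]
      nlinarith [sq_nonneg (B - 2 * a)]
    nlinarith [mul_pos hx2 (sub_pos.mpr hkey),
      mul_nonneg (mul_nonneg (by linarith : (0:ℝ) ≤ 1 - t) hb2) hBpos.le]
  · by_contra hc
    push_neg at hc
    set a := xs.2 with ha
    have hden : 0 < P - a := by linarith
    set t : ℝ := P / (2 * (P - a)) with htdef
    have ht0 : 0 < t := by positivity
    have ht1 : t < 1 := by
      rw [htdef, div_lt_one (by linarith)]; linarith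
    have hzS : (t • xs + (1 - t) • p) ∈ S :=
      hconv hxs hpS ht0.le (by linarith) (by ring)
    have hz := hmax _ hzS
    simp only [Prod.smul_fst, Prod.smul_snd, Prod.fst_add, Prod.snd_add, smul_eq_mul] at hz
    have h2 : t * xs.2 + (1 - t) * p.2 = P / 2 := by
      have hp2' : p.2 = P := hp2
      rw [htdef, hp2']; field_simp; ring
    rw [h2] at hz
    have hkey : t * P / 2 > xs.2 := by
      rw [htdef]
      rw [gt_iff_lt, lt_div_iff₀ (by linarith)]
      nlinarith [sq_nonneg (P - 2 * a)]
    nlinarith [mul_pos hx1 (sub_pos.mpr hkey),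
      mul_nonneg (mul_nonneg (by linarith : (0:ℝ) ≤ 1 - t) hp1) hPpos.le]
end

section
/- For the distribution F(v) = 1 − e^{−v/e} on [0,e) with atom 1/e at e, and a fixed price p ∈ [0, e]: the seller's expected revenue is p·e^{−p/e}, the buyer's expected utility is e^{1−p/e} − 1, and the gains-from-trade is p·e^{−p/e} + e^{1−p/e} − 1. -/
open MeasureTheory

/-!
Write `e = exp 1`. Integrating against the density `g(v) = e^{-v/e}/e` on `[p, e)` is elementary,
since `-(A + B (v + e)) e^{-v/e}` is an antiderivative of `(A + B v) g(v)`; the atom contributes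
`(A + B e)/e`. Each of the three quantities is the integral of `v ↦ A + B v` over `{v ≥ p}`, for
`(A, B) = (1, 0)`, `(-p, 1)` and `(0, 1)` respectively.
-/

open Set Real

lemma Set.Ico_inter_Ici_of_le {α : Type*} [Preorder α] {a b c : α} (h : a ≤ c) :
    Ico a b ∩ Ici c = Ico c b := by
  ext x
  exact ⟨fun ⟨⟨_, hxb⟩, hcx⟩ => ⟨hcx, hxb⟩, fun ⟨hcx, hxb⟩ => ⟨⟨h.trans hcx, hxb⟩, hcx⟩⟩

theorem integral_withDensity_ofReal_add_smul_dirac {α : Type*} [MeasurableSpace α]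
    [MeasurableSingletonClass α] (ν : Measure α) {g f : α → ℝ} (hg : Measurable g)
    (hg0 : ∀ x, 0 ≤ g x) (hf : Integrable (fun x => g x * f x) ν) (b : α) {c : ℝ} (hc : 0 ≤ c) :
    ∫ x, f x ∂(ν.withDensity (fun x => ENNReal.ofReal (g x)) + ENNReal.ofReal c • Measure.dirac b)
      = ∫ x, g x * f x ∂ν + c * f b := by
  have hlt : ∀ᵐ x ∂ν, ENNReal.ofReal (g x) < ⊤ := ae_of_all _ fun _ => ENNReal.ofReal_lt_top
  have hsmul : (fun x => (ENNReal.ofReal (g x)).toReal • f x) = fun x => g x * f x := by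
    funext x; rw [ENNReal.toReal_ofReal (hg0 x), smul_eq_mul]
  have hdens : Integrable f (ν.withDensity fun x => ENNReal.ofReal (g x)) := by
    rwa [integrable_withDensity_iff_integrable_smul' hg.ennreal_ofReal hlt, hsmul]
  rw [integral_add_measure hdens
      ((integrable_dirac enorm_lt_top).smul_measure ENNReal.ofReal_ne_top),
    integral_withDensity_eq_integral_toReal_smul hg.ennreal_ofReal hlt, hsmul,
    integral_smul_measure, integral_dirac, ENNReal.toReal_ofReal hc, smul_eq_mul]

theorem hasDerivAt_affine_mul_exp_neg_div (A B : ℝ) {E : ℝ} (hE : E ≠ 0) (v : ℝ) :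
    HasDerivAt (fun v => -(A + B * (v + E)) * exp (-v / E)) ((A + B * v) * (exp (-v / E) / E)) v := by
  have hlin : HasDerivAt (fun v => -(A + B * (v + E))) (-B) v := by
    simpa using ((((hasDerivAt_id' v).add_const E).const_mul B).const_add A).fun_neg
  have hexp : HasDerivAt (fun v => exp (-v / E)) (exp (-v / E) * (-1 / E)) v :=
    (hasDerivAt_exp _).comp v (by simpa using (hasDerivAt_id v).neg.div_const E)
  refine (hlin.fun_mul hexp).congr_deriv ?_
  field_simp
  ring

theorem integral_affine_mul_exp_neg_div (A B : ℝ) {E : ℝ} (hE : E ≠ 0) (p q : ℝ) :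
    ∫ v in p..q, (A + B * v) * (exp (-v / E) / E)
      = (A + B * (p + E)) * exp (-p / E) - (A + B * (q + E)) * exp (-q / E) := by
  rw [intervalIntegral.integral_eq_sub_of_hasDerivAt
    (fun v _ => hasDerivAt_affine_mul_exp_neg_div A B hE v)
    ((by fun_prop : Continuous fun v => (A + B * v) * (exp (-v / E) / E)).intervalIntegrable _ _)]
  ring

noncomputable def expAtomMeasure : Measure ℝ :=
  (volume.restrict (Ico 0 (exp 1))).withDensity (fun v => ENNReal.ofReal (exp (-v / exp 1) / exp 1))
    + ENNReal.ofReal (1 / exp 1) • Measure.dirac (exp 1)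

theorem integral_ite_affine_expAtomMeasure (A B : ℝ) {p : ℝ} (hp : p ∈ Icc 0 (exp 1)) :
    ∫ v, (if p ≤ v then A + B * v else 0) ∂expAtomMeasure
      = (A + B * p) * exp (-p / exp 1) + B * (exp (1 - p / exp 1) - 1) := by
  have hind : (fun v => exp (-v / exp 1) / exp 1 * (if p ≤ v then A + B * v else 0))
      = (Ici p).indicator fun v => (A + B * v) * (exp (-v / exp 1) / exp 1) := by
    funext v
    by_cases h : p ≤ v <;> simp [h, mul_comm]
  have hint : IntegrableOn ((Ici p).indicator fun v => (A + B * v) * (exp (-v / exp 1) / exp 1))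
      (Ico 0 (exp 1)) :=
    ((by fun_prop : Continuous fun v => (A + B * v) * (exp (-v / exp 1) / exp 1)).integrableOn_Icc
      |>.mono_set Ico_subset_Icc_self).indicator measurableSet_Ici
  rw [expAtomMeasure, integral_withDensity_ofReal_add_smul_dirac _ (by fun_prop)
      (fun v => by positivity) (hind ▸ hint) _ (by positivity), hind,
    setIntegral_indicator measurableSet_Ici, Ico_inter_Ici_of_le hp.1, integral_Ico_eq_integral_Ioc,
    ← intervalIntegral.integral_of_le hp.2, integral_affine_mul_exp_neg_div A B (exp_ne_zero 1),
    if_pos hp.2, neg_div_self (exp_ne_zero 1), sub_eq_add_neg 1, exp_add, exp_neg]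
  field_simp
  ring

/-- for the distribution with density `(1/e)e^{−v/e}` on `[0,e)` and an atom of
mass `1/e` at `e`, and a fixed price `p ∈ [0, e]`: the seller's expected revenue is
`p·e^{−p/e}`, the buyer's expected utility is `e^{1−p/e} − 1`, and the GFT is their sum. -/
theorem exp_mhr_fixed_price_utilities
    (μ : Measure ℝ)
    (hμ : μ = (volume.restrict (Set.Ico 0 (Real.exp 1))).withDensity
            (fun v => ENNReal.ofReal (Real.exp (-v / Real.exp 1) / Real.exp 1))
          + ENNReal.ofReal (1 / Real.exp 1) • Measure.dirac (Real.exp 1))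
    (p : ℝ) (hp : p ∈ Set.Icc (0 : ℝ) (Real.exp 1)) :
    -- seller's expected revenue
    p * (μ (Set.Ici p)).toReal = p * Real.exp (-p / Real.exp 1) ∧
    -- buyer's expected utility
    (∫ v, (if p ≤ v then v - p else 0) ∂μ) = Real.exp (1 - p / Real.exp 1) - 1 ∧
    -- gains-from-trade
    (∫ v, (if p ≤ v then v else 0) ∂μ)
      = p * Real.exp (-p / Real.exp 1) + Real.exp (1 - p / Real.exp 1) - 1 := by
  obtain rfl : μ = expAtomMeasure := hμ
  have revenue : (expAtomMeasure (Ici p)).toReal = exp (-p / exp 1) := by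
    rw [← measureReal_def, ← integral_indicator_one measurableSet_Ici]
    simpa [indicator_apply] using integral_ite_affine_expAtomMeasure 1 0 hp
  refine ⟨by rw [revenue], ?_, ?_⟩
  · simpa [sub_eq_neg_add] using integral_ite_affine_expAtomMeasure (-p) 1 hp
  · convert integral_ite_affine_expAtomMeasure 0 1 hp using 1 <;> simp only [zero_add, one_mul]
    ring
end

section
/- The function g(p) = (1/(e−1))·(p·e^{−p/e} + min{(e−1)·p·e^{−p/e}, e^{1−p/e} − 1}) satisfies g(p) < 0.944 for all p ∈ [0, e]. -/
lemma exp_neg_08_div_e_le :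
    Real.exp (-(0.8) / Real.exp 1) ≤ 0.74507 := by
  have hEpos : 0 < Real.exp 1 := Real.exp_pos 1
  have he2 : Real.exp 1 < 2.7182818286 := Real.exp_one_lt_d9
  set x : ℝ := 0.8 / Real.exp 1 with hxdef
  have hx0 : 0 ≤ x := by positivity
  have hxlb : (0.2943035 : ℝ) ≤ x := by
    rw [hxdef, le_div_iff₀ hEpos]
    nlinarith
  have htaylor := Real.sum_le_exp_of_nonneg hx0 5
  simp [Finset.sum_range_succ, Nat.factorial] at htaylor
  have hexp : (1.342171 : ℝ) ≤ Real.exp x := by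
    nlinarith [sq_nonneg x, sq_nonneg (x - 0.2943035), pow_le_pow_left₀ (by norm_num : (0:ℝ) ≤ 0.2943035) hxlb 2]
  have hrw : -(0.8 : ℝ) / Real.exp 1 = -x := by rw [hxdef]; ring
  rw [hrw, Real.exp_neg]
  have h1 : (Real.exp x)⁻¹ ≤ (1.342171 : ℝ)⁻¹ :=
    inv_anti₀ (by norm_num) hexp
  calc (Real.exp x)⁻¹ ≤ (1.342171 : ℝ)⁻¹ := h1
    _ ≤ 0.74507 := by norm_num

set_option maxHeartbeats 1000000 in
/-- the function
`g(p) = (1/(e−1))·(p·e^{−p/e} + min{(e−1)·p·e^{−p/e}, e^{1−p/e} − 1})`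
is strictly below `0.944` on `[0, e]`. -/
theorem mhr_upper_bound_function_lt
    (p : ℝ) (hp : p ∈ Set.Icc (0 : ℝ) (Real.exp 1)) :
    (1 / (Real.exp 1 - 1)) *
        (p * Real.exp (-p / Real.exp 1) +
          min ((Real.exp 1 - 1) * p * Real.exp (-p / Real.exp 1))
            (Real.exp (1 - p / Real.exp 1) - 1)) < 0.944 := by
  obtain ⟨hp0, hpe⟩ := hp
  have hEpos : 0 < Real.exp 1 := Real.exp_pos 1
  have he1 : (2.7182818283 : ℝ) < Real.exp 1 := Real.exp_one_gt_d9
  have he2 : Real.exp 1 < 2.7182818286 := Real.exp_one_lt_d9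
  have hq : Real.exp (-(0.8) / Real.exp 1) ≤ 0.74507 := exp_neg_08_div_e_le
  have hqpos : 0 < Real.exp (-(0.8) / Real.exp 1) := Real.exp_pos _
  have hexpos : 0 < Real.exp (-p / Real.exp 1) := Real.exp_pos _
  set E := Real.exp 1 with hE
  set q : ℝ := Real.exp (-(0.8) / E) with hqdef
  set ex : ℝ := Real.exp (-p / E) with hexdef
  have hE1 : (1 : ℝ) < E := by linarith
  clear_value E q ex
  rw [one_div_mul_eq_div, div_lt_iff₀ (by linarith : (0:ℝ) < E - 1)]
  rcases le_total p 0.8 with hple | hpge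
  · -- small p : use the left argument of min
    have hmin := min_le_left ((E - 1) * p * ex) (Real.exp (1 - p / E) - 1)
    -- key : p * ex ≤ 0.8 * q
    have hkey : p * ex ≤ 0.8 * q := by
      have hs0 : 0 ≤ (0.8 - p) / E := div_nonneg (by linarith) hEpos.le
      have hsE : ((0.8 - p) / E) * E = 0.8 - p := by field_simp
      set s : ℝ := (0.8 - p) / E with hsdef
      have hTpos : 0 < Real.exp s := Real.exp_pos _
      have hdec : ex = q * Real.exp s := by
        rw [hexdef, hqdef, ← Real.exp_add]
        congr 1
        rw [hsdef]
        field_simp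
        ring
      set T : ℝ := Real.exp s with hTdef
      have hT1 : (1 - s) * T ≤ 1 := by
        have h := Real.add_one_le_exp (-s)
        rw [Real.exp_neg, ← hTdef] at h
        have h2 := mul_le_mul_of_nonneg_right h hTpos.le
        rw [inv_mul_cancel₀ hTpos.ne'] at h2
        nlinarith
      clear_value T s
      have hps : p ≤ 0.8 * (1 - s) := by
        nlinarith [mul_nonneg hs0 (by linarith : (0:ℝ) ≤ E - 0.8)]
      have hpT : p * T ≤ 0.8 := by nlinarith
      rw [hdec]
      nlinarith
    have hnum : p * ex + min ((E - 1) * p * ex) (Real.exp (1 - p / E) - 1)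
        ≤ E * (p * ex) := by nlinarith
    have h1 : E * (p * ex) ≤ E * (0.8 * q) :=
      mul_le_mul_of_nonneg_left hkey hEpos.le
    have h2 : E * (0.8 * q) ≤ 2.7182818286 * (0.8 * 0.74507) := by nlinarith
    have h3 : (2.7182818286 : ℝ) * (0.8 * 0.74507) < 0.944 * (E - 1) := by nlinarith
    linarith
  · -- large p : use the right argument of min
    have hmin := min_le_right ((E - 1) * p * ex) (Real.exp (1 - p / E) - 1)
    have hsplit : Real.exp (1 - p / E) = E * ex := by
      rw [hexdef, hE, ← Real.exp_add]
      congr 1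
      ring
    -- key : (p + E) * ex ≤ (0.8 + E) * q
    have hkey : (p + E) * ex ≤ (0.8 + E) * q := by
      have ht0 : 0 ≤ (p - 0.8) / E := div_nonneg (by linarith) hEpos.le
      have htE : ((p - 0.8) / E) * E = p - 0.8 := by field_simp
      set t : ℝ := (p - 0.8) / E with htdef
      have hUpos : 0 < Real.exp (-t) := Real.exp_pos _
      have hdec : ex = q * Real.exp (-t) := by
        rw [hexdef, hqdef, ← Real.exp_add]
        congr 1
        rw [htdef]
        field_simp
        ring
      set U : ℝ := Real.exp (-t) with hUdef
      have hU1 : (1 + t) * U ≤ 1 := by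
        have h := Real.add_one_le_exp t
        have hcanc : Real.exp t * U = 1 := by
          rw [hUdef, ← Real.exp_add]
          simp
        have h2 := mul_le_mul_of_nonneg_right h hUpos.le
        rw [hcanc] at h2
        linarith
      clear_value U t
      have hptE : p + E ≤ (0.8 + E) * (1 + t) := by nlinarith [htE, ht0]
      have hpU : (p + E) * U ≤ 0.8 + E := by
        nlinarith [mul_le_mul_of_nonneg_right hptE hUpos.le,
          mul_le_mul_of_nonneg_left hU1 (by linarith : (0:ℝ) ≤ 0.8 + E)]
      rw [hdec]
      nlinarith [mul_le_mul_of_nonneg_right hpU hqpos.le]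
    have hnum : p * ex + min ((E - 1) * p * ex) (Real.exp (1 - p / E) - 1)
        ≤ (p + E) * ex - 1 := by
      rw [hsplit]
      have h := min_le_right ((E - 1) * p * ex) (E * ex - 1)
      nlinarith
    have h2 : (0.8 + E) * q ≤ (0.8 + 2.7182818286) * 0.74507 := by nlinarith
    have h3 : (0.8 + 2.7182818286 : ℝ) * 0.74507 - 1 < 0.944 * (E - 1) := by nlinarith
    linarith
end

section
/- Let F be the CDF on [1, K] defined in Example 'all fair mech irregular': F(v) = (v−1)/v for v ∈ [1, v†], F(v) = 1 − ln(K)/((v/K + √(ln K) − 1)·K) for v ∈ [v†, K], F(v) = 1 for v > K, where v† = K/(√(ln K) + 1). Then the monopoly revenue max_p p·(1 − F(p)) equals √(ln K), achieved at price p = K. -/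
/-! Below `v†` the distribution is equal-revenue, so every price there earns exactly `1`. On
`(v†, K]`, writing `s = √(ln K)`, the revenue `p s² / (p + (s - 1) K)` is nondecreasing in `p`
because `s ≥ 1`, so it is maximised at `p = K`, where it equals `s ≥ 1`. -/

open Real

lemma one_le_sqrt_log_of_exp_one_le {K : ℝ} (hK : exp 1 ≤ K) : 1 ≤ √(log K) := by
  have hlog : 1 ≤ log K := (le_log_iff_exp_le (lt_of_lt_of_le (exp_pos 1) hK)).2 hK
  simpa using sqrt_le_sqrt hlog

lemma mul_one_sub_sub_one_div_self {p : ℝ} (hp : p ≠ 0) : p * (1 - (p - 1) / p) = 1 := by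
  field_simp
  ring

section TailRevenue

variable {K s p : ℝ}

lemma tail_revenue_le (hs : 1 ≤ s) (hp : 0 < p) (hpK : p ≤ K) :
    p * (s ^ 2 / ((p / K + s - 1) * K)) ≤ s := by
  have hK : 0 < K := hp.trans_le hpK
  have hden : (p / K + s - 1) * K = p + (s - 1) * K := by field_simp; ring
  have hden_pos : 0 < p + (s - 1) * K := by nlinarith
  rw [hden, mul_div_assoc', div_le_iff₀ hden_pos]
  -- the difference of the two sides is `s (s - 1) (K - p)`
  nlinarith [mul_nonneg (mul_nonneg (by linarith : 0 ≤ s) (sub_nonneg.2 hs)) (sub_nonneg.2 hpK)]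

lemma tail_revenue_self (hK : K ≠ 0) (hs : s ≠ 0) :
    K * (s ^ 2 / ((K / K + s - 1) * K)) = s := by
  rw [div_self hK, add_sub_cancel_left]
  field_simp

end TailRevenue

/-- for the (non-regular) distribution of Example `all fair mech irregular`,
with `v† = K/(√(ln K) + 1)`, CDF `F(v) = (v−1)/v` on `[1, v†]`,
`F(v) = 1 − ln(K)/((v/K + √(ln K) − 1)·K)` on `(v†, K]` and `F(v) = 1` beyond `K`,
the monopoly revenue `max_{p ∈ [1,K]} p·(1 − F p)` equals `√(ln K)`, attained at `p = K`. -/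
theorem irregular_example_monopoly_revenue
    (K : ℝ) (hK : Real.exp 1 ≤ K)
    (vd : ℝ) (hvd : vd = K / (Real.sqrt (Real.log K) + 1))
    (F : ℝ → ℝ)
    (hF : ∀ v, F v =
      if v ≤ vd then (v - 1) / v
      else if v ≤ K then 1 - Real.log K / ((v / K + Real.sqrt (Real.log K) - 1) * K)
      else 1) :
    IsGreatest {r : ℝ | ∃ p ∈ Set.Icc (1 : ℝ) K, r = p * (1 - F p)}
        (Real.sqrt (Real.log K)) ∧
      K * (1 - F K) = Real.sqrt (Real.log K) := by
  have hs : 1 ≤ √(log K) := one_le_sqrt_log_of_exp_one_le hK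
  have hK1 : 1 ≤ K := by linarith [add_one_le_exp (1 : ℝ)]
  have hlog : log K = √(log K) ^ 2 := (sq_sqrt (log_nonneg hK1)).symm
  set s := √(log K)
  have hvdK : vd < K := hvd ▸ div_lt_self (by linarith) (by linarith)
  have hKrev : K * (1 - F K) = s := by
    rw [hF K, if_neg hvdK.not_ge, if_pos le_rfl, sub_sub_cancel, hlog]
    exact tail_revenue_self (by positivity) (by positivity)
  refine ⟨⟨⟨K, ⟨hK1, le_rfl⟩, hKrev.symm⟩, ?_⟩, hKrev⟩
  rintro r ⟨p, ⟨hp1, hpK⟩, rfl⟩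
  rw [hF p]
  split_ifs
  · rwa [mul_one_sub_sub_one_div_self (by positivity)]
  · rw [sub_sub_cancel, hlog]
    exact tail_revenue_le hs (by positivity) hpK
end
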